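/- arXiv:1508.01823 — 8 statements merged into one kernel-verified Lean document; each statement's English description precedes it below -/
import Mathlib

section
/- For an involution y in a symmetric group S_n (with generating set the simple transpositions) and a simple transposition s, if conjugation satisfies sys = y at the level of length, i.e. ℓ(sys) = ℓ(y), then sys = y. -/
/-!
Right multiplication by an adjacent transposition `s = (a b)` changes the inversion set by
exactly the pair `(a, b)`, so `ℓ(w s) = ℓ(w) + 1` if `w a < w b` and `ℓ(w) - 1` otherwise.
For an involution `y`, `ℓ(s y) = ℓ((s y)⁻¹) = ℓ(y s)`. Unless `y` maps `{a, b}` to itself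
(and then commutes with `s`), `s` preserves the order of `y a` and `y b`, so the two steps
`ℓ(y) → ℓ(y s) = ℓ(s y) → ℓ(s y s)` change the length in the same direction.
-/

/-- The Coxeter length of a permutation of `Fin n`, i.e. its number of inversions. -/
def ell {n : ℕ} (w : Equiv.Perm (Fin n)) : ℕ :=
  (Finset.univ.filter (fun p : Fin n × Fin n => p.1 < p.2 ∧ w p.2 < w p.1)).card

/-- `s` is a simple transposition `(i, i+1)` of `Fin n`. -/
def IsSimple {n : ℕ} (s : Equiv.Perm (Fin n)) : Prop :=
  ∃ i : ℕ, ∃ h : i + 1 < n, s = Equiv.swap ⟨i, Nat.lt_of_succ_lt h⟩ ⟨i + 1, h⟩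

open Equiv Finset

theorem CovBy.swap_lt_swap_iff {α : Type*} [LinearOrder α] {a b u v : α} (hab : a ⋖ b)
    (huv : ¬(u = a ∧ v = b)) (hvu : ¬(u = b ∧ v = a)) :
    swap a b u < swap a b v ↔ u < v := by
  have hle : ∀ c, c < b → c ≤ a := fun _ => hab.le_of_lt
  have hge : ∀ c, a < c → b ≤ c := fun _ => hab.ge_of_gt
  rw [swap_apply_def, swap_apply_def]
  split_ifs <;> grind [hab.lt]

namespace Equiv.Perm

variable {α : Type*} [LinearOrder α] [Fintype α]

def inversions (w : Perm α) : Finset (α × α) :=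
  univ.filter fun p => p.1 < p.2 ∧ w p.2 < w p.1

@[simp]
theorem mem_inversions {w : Perm α} {p : α × α} :
    p ∈ w.inversions ↔ p.1 < p.2 ∧ w p.2 < w p.1 := by
  simp [inversions]

theorem inversions_inv (w : Perm α) :
    w⁻¹.inversions = w.inversions.map ((prodComm α α).trans (w.prodCongr w)).toEmbedding := by
  ext p
  rw [mem_map_equiv]
  simp [and_comm]

theorem card_inversions_inv (w : Perm α) : w⁻¹.inversions.card = w.inversions.card := by
  rw [inversions_inv, card_map]

theorem inversions_mul_swap {w : Perm α} {a b : α} (hab : a ⋖ b) (h : w a < w b) :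
    (w * swap a b).inversions =
      insert (a, b) (w.inversions.map ((swap a b).prodCongr (swap a b)).toEmbedding) := by
  ext ⟨u, v⟩
  rw [mem_insert, mem_map_equiv]
  simp only [mem_inversions, Prod.mk.injEq, coe_mul, Function.comp_apply, prodCongr_symm,
    symm_swap, prodCongr_apply, Prod.map]
  by_cases hu : u = a ∧ v = b
  · obtain ⟨rfl, rfl⟩ := hu
    simp [hab.lt, h]
  by_cases hv : u = b ∧ v = a
  · obtain ⟨rfl, rfl⟩ := hv
    simp [hab.lt.ne, h.le]
  rw [hab.swap_lt_swap_iff hu hv]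
  tauto

theorem card_inversions_mul_swap {w : Perm α} {a b : α} (hab : a ⋖ b) (h : w a < w b) :
    (w * swap a b).inversions.card = w.inversions.card + 1 := by
  rw [inversions_mul_swap hab h, card_insert_of_notMem, card_map]
  simp [hab.lt.not_gt]

end Equiv.Perm

theorem Equiv.swap_mul_mul_swap_eq_self {α : Type*} [DecidableEq α] {y : Perm α} {a b : α}
    (h : (y a = a ∧ y b = b) ∨ (y a = b ∧ y b = a)) : swap a b * y * swap a b = y := by
  have hconj : y * swap a b * y⁻¹ = swap a b := by
    rw [← swap_apply_apply]
    rcases h with ⟨ha, hb⟩ | ⟨ha, hb⟩ <;> simp [ha, hb, swap_comm]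
  calc swap a b * y * swap a b = y * swap a b * y⁻¹ * y * swap a b := by rw [hconj]
    _ = y := by simp [mul_assoc]

section Length

variable {n : ℕ} {a b : Fin n}

theorem ell_eq_card_inversions (w : Perm (Fin n)) : ell w = w.inversions.card := rfl

theorem ell_inv (w : Perm (Fin n)) : ell w⁻¹ = ell w := by
  simp only [ell_eq_card_inversions, Perm.card_inversions_inv]

theorem ell_mul_swap_of_lt {w : Perm (Fin n)} (hab : a ⋖ b) (h : w a < w b) :
    ell (w * swap a b) = ell w + 1 :=
  Perm.card_inversions_mul_swap hab h

theorem ell_mul_swap_of_gt {w : Perm (Fin n)} (hab : a ⋖ b) (h : w b < w a) :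
    ell (w * swap a b) + 1 = ell w := by
  simpa [mul_swap_mul_self, eq_comm] using
    ell_mul_swap_of_lt (w := w * swap a b) hab (by simpa using h)

theorem ell_swap_mul_mul_swap_ne {y : Perm (Fin n)} (hy : y * y = 1) (hab : a ⋖ b)
    (hfix : ¬((y a = a ∧ y b = b) ∨ (y a = b ∧ y b = a))) :
    ell (swap a b * y * swap a b) ≠ ell y := by
  have hsy : ell (swap a b * y) = ell (y * swap a b) := by
    rw [← ell_inv, mul_inv_rev, swap_inv, inv_eq_of_mul_eq_one_right hy]
  have hswap : swap a b (y a) < swap a b (y b) ↔ y a < y b :=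
    hab.swap_lt_swap_iff (by tauto) (by tauto)
  have hswap' : swap a b (y b) < swap a b (y a) ↔ y b < y a :=
    hab.swap_lt_swap_iff (by tauto) (by tauto)
  rcases (y.injective.ne hab.lt.ne).lt_or_gt with hlt | hgt
  · have h₁ := ell_mul_swap_of_lt hab hlt
    have h₂ := ell_mul_swap_of_lt (w := swap a b * y) hab (hswap.2 hlt)
    omega
  · have h₁ := ell_mul_swap_of_gt hab hgt
    have h₂ := ell_mul_swap_of_gt (w := swap a b * y) hab (hswap'.2 hgt)
    omega

end Length

/-- For an involution `y` in the symmetric group and a simple transposition `s`,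
if `ℓ(sys) = ℓ(y)` then `sys = y`. -/
theorem stmt0 {n : ℕ} (y s : Equiv.Perm (Fin n)) (hy : y * y = 1)
    (hs : IsSimple s) (h : ell (s * y * s) = ell y) : s * y * s = y := by
  obtain ⟨i, hi, rfl⟩ := hs
  have hab : (⟨i, Nat.lt_of_succ_lt hi⟩ : Fin n) ⋖ ⟨i + 1, hi⟩ :=
    Fin.covBy_iff.2 (Nat.covBy_iff_add_one_eq.2 rfl)
  by_contra hne
  exact ell_swap_mul_mul_swap_ne hy hab (mt swap_mul_mul_swap_eq_self hne) h
end

section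
/- For an involution y in S_n, the Rothe diagram D(y) = {(i,j) : j < y(i) and i < y⁻¹(j)} is invariant under transposition (i,j) ↦ (j,i), and the number of diagonal cells (i,i) in D(y) equals κ(y), the number of two-cycles of y. -/
/-- The number of two-cycles of an involution `y`. -/
def kap {n : ℕ} (y : Equiv.Perm (Fin n)) : ℕ :=
  (Finset.univ.filter (fun i : Fin n => i < y i)).card

/-- The Rothe diagram `D(w) = {(i,j) : j < w(i) and i < w⁻¹(j)}` (0-indexed). -/
def rothe {n : ℕ} (w : Equiv.Perm (Fin n)) : Finset (Fin n × Fin n) :=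
  Finset.univ.filter (fun p : Fin n × Fin n => p.2 < w p.1 ∧ p.1 < w⁻¹ p.2)

/-- For an involution `y ∈ S_n`, the Rothe diagram is invariant under transposition
`(i,j) ↦ (j,i)`, and the number of diagonal cells `(i,i)` in it equals `κ(y)`. -/
theorem stmt6 {n : ℕ} (y : Equiv.Perm (Fin n)) (hy : y * y = 1) :
    (∀ p : Fin n × Fin n, p ∈ rothe y ↔ (p.2, p.1) ∈ rothe y) ∧
    ((rothe y).filter (fun p => p.1 = p.2)).card = kap y := by
  have hinv : y⁻¹ = y := by
    rw [inv_eq_iff_mul_eq_one, hy]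
  constructor
  · intro p
    simp only [rothe, Finset.mem_filter, Finset.mem_univ, true_and, hinv]
    tauto
  · rw [kap]
    apply Finset.card_bij (fun p _ => p.1)
    · intro p hp
      simp only [rothe, Finset.mem_filter, Finset.mem_univ, true_and, hinv] at hp ⊢
      obtain ⟨⟨h1, _⟩, h3⟩ := hp
      rwa [← h3] at h1
    · intro p hp q hq h
      simp only [Finset.mem_filter] at hp hq
      exact Prod.ext h (by rw [← hp.2, ← hq.2, h])
    · intro i hi
      simp only [Finset.mem_filter, Finset.mem_univ, true_and] at hi
      exact ⟨(i, i), by simp [rothe, hinv, hi], rfl⟩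
end

section
/- For a fixed-point-free involution z in S_{2n}, the cardinality of D̂_FPF(z) = {(i,j) : j < z(i), i < z(j), j < i} equals (ℓ(z) − κ(z))/2, where κ(z) = n, that is, |D̂_FPF(z)| = (ℓ(z) − n)/2. -/
/-- The fixed-point-free involution Rothe diagram
`D̂_FPF(z) = {(i,j) : j < z(i), i < z(j), j < i}`. -/
def rotheFpf {n : ℕ} (z : Equiv.Perm (Fin n)) : Finset (Fin n × Fin n) :=
  Finset.univ.filter (fun p : Fin n × Fin n => p.2 < z p.1 ∧ p.1 < z p.2 ∧ p.2 < p.1)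

/-- For a fixed-point-free involution `z ∈ S_{2n}`: `κ(z) = n` and
`|D̂_FPF(z)| = (ℓ(z) − κ(z))/2`. -/
theorem stmt8 {n : ℕ} (z : Equiv.Perm (Fin (2 * n))) (hz : z * z = 1)
    (hfpf : ∀ i, z i ≠ i) :
    kap z = n ∧ 2 * (rotheFpf z).card + kap z = ell z := by
  classical
  have hzz : ∀ i, z (z i) = i := by
    intro i
    have := congrArg (fun w : Equiv.Perm (Fin (2 * n)) => w i) hz
    simpa using this
  -- kap z = n
  have hcard : (Finset.univ.filter fun i : Fin (2 * n) => i < z i).card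
      = (Finset.univ.filter fun i : Fin (2 * n) => z i < i).card := by
    refine Finset.card_bij (fun i _ => z i) ?_ ?_ ?_
    · intro a ha
      simp only [Finset.mem_filter, Finset.mem_univ, true_and] at ha ⊢
      simpa [hzz] using ha
    · intro a _ b _ hab
      exact z.injective hab
    · intro b hb
      simp only [Finset.mem_filter, Finset.mem_univ, true_and] at hb
      exact ⟨z b, by simp [hzz, hb], hzz b⟩
  have hsplit : (Finset.univ.filter fun i : Fin (2 * n) => i < z i).card
      + (Finset.univ.filter fun i : Fin (2 * n) => ¬ i < z i).card = 2 * n := by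
    rw [Finset.card_filter_add_card_filter_not]
    simp
  have hneg : (Finset.univ.filter fun i : Fin (2 * n) => ¬ i < z i)
      = (Finset.univ.filter fun i : Fin (2 * n) => z i < i) := by
    ext i
    simp only [Finset.mem_filter, Finset.mem_univ, true_and, not_lt]
    exact ⟨fun h => lt_of_le_of_ne h (hfpf i), le_of_lt⟩
  have hkap : kap z = n := by
    have : kap z + kap z = 2 * n := by
      rw [kap, hcard]
      rw [hneg] at hsplit
      omega
    omega
  refine ⟨hkap, ?_⟩
  -- D : all cells of the Rothe diagram
  set D : Finset (Fin (2 * n) × Fin (2 * n)) :=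
    Finset.univ.filter (fun p => p.2 < z p.1 ∧ p.1 < z p.2) with hD
  -- ell z = D.card
  have hell : ell z = D.card := by
    refine Finset.card_bij' (fun p _ => (p.1, z p.2)) (fun q _ => (q.1, z q.2)) ?_ ?_ ?_ ?_
    · intro p hp
      simp only [ell, Finset.mem_filter, Finset.mem_univ, true_and] at hp
      simp only [hD, Finset.mem_filter, Finset.mem_univ, true_and]
      exact ⟨hp.2, by simpa [hzz] using hp.1⟩
    · intro q hq
      simp only [hD, Finset.mem_filter, Finset.mem_univ, true_and] at hq
      simp only [ell, Finset.mem_filter, Finset.mem_univ, true_and]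
      exact ⟨by simpa [hzz] using hq.2, by simpa [hzz] using hq.1⟩
    · intro p _; simp [hzz]
    · intro q _; simp [hzz]
  -- split D into below-diagonal, above-diagonal and diagonal parts
  set A : Finset (Fin (2 * n) × Fin (2 * n)) :=
    Finset.univ.filter (fun p => p.2 < z p.1 ∧ p.1 < z p.2 ∧ p.1 < p.2) with hA
  set Dg : Finset (Fin (2 * n) × Fin (2 * n)) :=
    Finset.univ.filter (fun p => p.2 < z p.1 ∧ p.1 < z p.2 ∧ p.1 = p.2) with hDg
  have hunion : D = (rotheFpf z ∪ A) ∪ Dg := by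
    ext p
    simp only [hD, hA, hDg, rotheFpf, Finset.mem_union, Finset.mem_filter,
      Finset.mem_univ, true_and]
    constructor
    · rintro ⟨h1, h2⟩
      rcases lt_trichotomy p.1 p.2 with h | h | h
      · exact Or.inl (Or.inr ⟨h1, h2, h⟩)
      · exact Or.inr ⟨h1, h2, h⟩
      · exact Or.inl (Or.inl ⟨h1, h2, h⟩)
    · rintro ((⟨h1, h2, _⟩ | ⟨h1, h2, _⟩) | ⟨h1, h2, _⟩) <;> exact ⟨h1, h2⟩
  have hdisj1 : Disjoint (rotheFpf z) A := by
    rw [Finset.disjoint_left]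
    intro p hp hq
    simp only [rotheFpf, hA, Finset.mem_filter] at hp hq
    exact absurd hq.2.2.2 (not_lt.2 (le_of_lt hp.2.2.2))
  have hdisj2 : Disjoint (rotheFpf z ∪ A) Dg := by
    rw [Finset.disjoint_left]
    intro p hp hq
    simp only [rotheFpf, hA, hDg, Finset.mem_union, Finset.mem_filter] at hp hq
    rcases hp with h | h
    · exact absurd hq.2.2.2 (ne_of_gt h.2.2.2)
    · exact absurd hq.2.2.2 (ne_of_lt h.2.2.2)
  have hAcard : A.card = (rotheFpf z).card := by
    refine Finset.card_bij' (fun p _ => (p.2, p.1)) (fun q _ => (q.2, q.1)) ?_ ?_ ?_ ?_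
    · intro p hp
      simp only [hA, Finset.mem_filter, Finset.mem_univ, true_and] at hp
      simp only [rotheFpf, Finset.mem_filter, Finset.mem_univ, true_and]
      exact ⟨hp.2.1, hp.1, hp.2.2⟩
    · intro q hq
      simp only [rotheFpf, Finset.mem_filter, Finset.mem_univ, true_and] at hq
      simp only [hA, Finset.mem_filter, Finset.mem_univ, true_and]
      exact ⟨hq.2.1, hq.1, hq.2.2⟩
    · intro p _; rfl
    · intro q _; rfl
  have hDgcard : Dg.card = kap z := by
    refine Finset.card_bij' (fun p _ => p.1) (fun i _ => (i, i)) ?_ ?_ ?_ ?_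
    · intro p hp
      simp only [hDg, Finset.mem_filter, Finset.mem_univ, true_and] at hp
      simp only [kap, Finset.mem_filter, Finset.mem_univ, true_and]
      obtain ⟨h1, _, h3⟩ := hp
      rw [h3]
      rwa [h3] at h1
    · intro i hi
      simp only [kap, Finset.mem_filter, Finset.mem_univ, true_and] at hi
      simp [hDg, hi]
    · intro p hp
      simp only [hDg, Finset.mem_filter, Finset.mem_univ, true_and] at hp
      exact Prod.ext rfl hp.2.2
    · intro i _; rfl
  rw [hell, hunion, Finset.card_union_of_disjoint hdisj2,
    Finset.card_union_of_disjoint hdisj1, hAcard, hDgcard]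
  ring
end

section
/- The Grassmannian involutions in S_∞ are exactly the shifted copies of g_k: if y is an involution with at most one descent, then y = 1_m × g_k for some m, k ≥ 0, where g_k = (1,k+1)(2,k+2)⋯(k,2k). -/
/-- The underlying function of the shifted Grassmannian involution `1_m × g_k`
(0-indexed): it fixes `0,…,m-1`, maps `m+i ↦ m+k+i` and `m+k+i ↦ m+i` for `i < k`,
and fixes everything `≥ m + 2k`. -/
def gfun (m k : ℕ) : ℕ → ℕ := fun x =>
  if x < m then x
  else if x < m + k then x + k
  else if x < m + 2 * k then x - k
  else x

/-- Every Grassmannian involution of `S_∞` (an involution with finite support and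
at most one descent) is a shifted copy `1_m × g_k` of `g_k`. -/
theorem stmt9 (y : Equiv.Perm ℕ) (hy : y * y = 1)
    (hfin : Set.Finite {x | y x ≠ x})
    (hgr : ∀ i j : ℕ, y (i + 1) < y i → y (j + 1) < y j → i = j) :
    ∃ m k : ℕ, ∀ x, y x = gfun m k x := by
  have hinv : ∀ x, y (y x) = x := by
    intro x
    have := congr_arg (fun p : Equiv.Perm ℕ => p x) hy
    simpa [Equiv.Perm.mul_apply] using this
  have hinj : Function.Injective y := y.injective
  by_cases h1 : ∀ x, y x = x
  · exact ⟨0, 0, fun x => by simp [gfun, h1 x]⟩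
  push_neg at h1
  -- there is a descent
  have hdesc : ∃ d, y (d + 1) < y d := by
    by_contra h
    push_neg at h
    have hsm : StrictMono (fun x => y x) := by
      apply strictMono_nat_of_lt_succ
      intro n
      exact lt_of_le_of_ne (h n) (fun he => by simpa using hinj he)
    obtain ⟨x0, hx0⟩ := h1
    have h2 : x0 ≤ y x0 := hsm.le_apply
    have h3 : y x0 ≤ y (y x0) := hsm.le_apply
    rw [hinv] at h3
    omega
  obtain ⟨d, hd⟩ := hdesc
  -- minimal non-fixed point
  have hex : ∃ n, y n ≠ n := h1
  set m := Nat.find hex with hmdef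
  have hm_ne : y m ≠ m := Nat.find_spec hex
  have hm_min : ∀ x, x < m → y x = x := fun x hx => by
    simpa using Nat.find_min hex hx
  -- bound on support
  obtain ⟨N, hN⟩ := hfin.bddAbove
  have hbig : ∀ z, N < z → y z = z := by
    intro z hz
    by_contra hne
    have : z ∈ {x | y x ≠ x} := hne
    exact absurd (hN this) (by omega)
  -- strict steps away from the descent
  have hstep : ∀ i, i ≠ d → y i < y (i + 1) := by
    intro i hi
    rcases lt_trichotomy (y i) (y (i + 1)) with h | h | h
    · exact h
    · exact absurd (hinj h) (by omega)
    · exact absurd (hgr i d h hd) hi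
  have hA : ∀ j i, i + j ≤ d → y i + j ≤ y (i + j) := by
    intro j
    induction j with
    | zero => intro i _; simp
    | succ n ih =>
      intro i h
      have h1 := ih i (by omega)
      have h2 := hstep (i + n) (by omega)
      show y i + (n + 1) ≤ y (i + n + 1)
      omega
  have hB : ∀ j i, d + 1 ≤ i → y i + j ≤ y (i + j) := by
    intro j
    induction j with
    | zero => intro i _; simp
    | succ n ih =>
      intro i h
      have h1 := ih i h
      have h2 := hstep (i + n) (by omega)
      show y i + (n + 1) ≤ y (i + n + 1)
      omega
  have hB' : ∀ x, d + 1 ≤ x → y x ≤ x := by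
    intro x hx
    have hz : y (x + (N + 1)) = x + (N + 1) := hbig _ (by omega)
    have := hB (N + 1) x hx
    omega
  -- the minimal non-fixed point goes up
  have hmgt : m < y m := by
    rcases lt_trichotomy (y m) m with h | h | h
    · have h2 := hm_min (y m) h
      exact absurd (h2.symm.trans (hinv m)) hm_ne
    · exact absurd h hm_ne
    · exact h
  have hmd : m ≤ d := by
    by_contra h
    push_neg at h
    have := hB' m (by omega)
    omega
  have hF1 : ∀ x, m ≤ x → x ≤ d → x < y x := by
    intro x h1 h2
    have h3 := hA (x - m) m (by omega)
    have he : m + (x - m) = x := by omega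
    rw [he] at h3
    omega
  -- y m = d + 1
  have hym : y m = d + 1 := by
    have hge : d + 1 ≤ y m := by
      by_contra h
      push_neg at h
      have h2 := hF1 (y m) (by omega) (by omega)
      rw [hinv] at h2
      omega
    have hle : y m ≤ d + 1 := by
      by_contra h
      push_neg at h
      have hb := hB (y m - (d + 1)) (d + 1) le_rfl
      have he : (d + 1) + (y m - (d + 1)) = y m := by omega
      rw [he, hinv] at hb
      have hlt : y (d + 1) < m := by omega
      have h3 := hm_min _ hlt
      rw [hinv] at h3
      omega
    omega
  obtain ⟨k, hk⟩ : ∃ k, m + k = d + 1 := ⟨d + 1 - m, by omega⟩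
  -- the ascending block
  have hF4 : ∀ x, m ≤ x → x ≤ d → y x = x + k := by
    intro x
    induction x using Nat.strong_induction_on with
    | _ x ih =>
      intro hx1 hx2
      have hlow : x + k ≤ y x := by
        have h3 := hA (x - m) m (by omega)
        have he : m + (x - m) = x := by omega
        rw [he] at h3
        omega
      by_contra hne
      have hb := hB (y x - (x + k)) (x + k) (by omega)
      have he : (x + k) + (y x - (x + k)) = y x := by omega
      rw [he, hinv] at hb
      have hlt : y (x + k) < x := by omega
      rcases lt_or_ge (y (x + k)) m with hc | hc
      · have h3 := hm_min _ hc
        rw [hinv] at h3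
        omega
      · have h3 := ih (y (x + k)) hlt hc (by omega)
        rw [hinv] at h3
        omega
  -- the descending block
  have hF5 : ∀ x, m + k ≤ x → x ≤ d + k → y x = x - k := by
    intro x h1 h2
    have h3 := hF4 (x - k) (by omega) (by omega)
    have he : x - k + k = x := by omega
    rw [he] at h3
    have h4 := hinv (x - k)
    rw [h3] at h4
    exact h4
  -- fixed above
  have hF6 : ∀ x, d + k + 1 ≤ x → y x = x := by
    intro x hx
    by_contra hne
    have hyx : y x < x := lt_of_le_of_ne (hB' x (by omega)) hne
    rcases lt_or_ge (y x) m with hc | hc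
    · have h3 := hm_min _ hc
      rw [hinv] at h3
      omega
    rcases le_or_gt (y x) d with hc2 | hc2
    · have h3 := hF4 (y x) hc hc2
      rw [hinv] at h3
      omega
    · have h4 := hB' (y x) (by omega)
      rw [hinv] at h4
      omega
  refine ⟨m, k, fun x => ?_⟩
  unfold gfun
  split_ifs with g1 g2 g3
  · exact hm_min x g1
  · exact hF4 x (by omega) (by omega)
  · exact hF5 x (by omega) (by omega)
  · exact hF6 x (by omega)
end

section
/- If y ∈ S_∞ is a Grassmannian involution with y(1) = k+1 > 1, then the Rothe diagram of y equals the full square [k] × [k], and hence y = g_k. -/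
/-- The Rothe diagram of `w ∈ S_∞` (0-indexed):
`D(w) = {(i,j) : j < w(i) and i < w⁻¹(j)}`. -/
def rotheN (w : Equiv.Perm ℕ) : Set (ℕ × ℕ) :=
  {p | p.2 < w p.1 ∧ p.1 < w⁻¹ p.2}

open Function

def IsGrassmannian (f : ℕ → ℕ) : Prop :=
  ∀ i j, f (i + 1) < f i → f (j + 1) < f j → i = j

theorem add_le_apply_add_of_lt_succ {f : ℕ → ℕ} {a : ℕ} :
    ∀ {t : ℕ}, (∀ i, a ≤ i → i < a + t → f i < f (i + 1)) → f a + t ≤ f (a + t)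
  | 0, _ => le_rfl
  | t + 1, h => by
    have ih := add_le_apply_add_of_lt_succ (t := t) fun i hai _ => h i hai (by omega)
    have hstep : f (a + t) < f (a + t + 1) := h (a + t) (by omega) (by omega)
    show f a + (t + 1) ≤ f (a + t + 1)
    omega

namespace IsGrassmannian

theorem lt_succ {f : ℕ → ℕ} (hgr : IsGrassmannian f) (hf : Injective f)
    {d i : ℕ} (hd : f (d + 1) < f d) (hi : i ≠ d) : f i < f (i + 1) := by
  rcases lt_trichotomy (f i) (f (i + 1)) with h | h | h
  · exact h
  · exact absurd (hf h) (by omega)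
  · exact absurd (hgr i d h hd) hi

section Involution

variable {y : ℕ → ℕ} (hinv : Involutive y) (hgr : IsGrassmannian y) {k : ℕ} (hk : 0 < k)
  (hy0 : y 0 = k)
include hinv hgr hk hy0

theorem lt_succ_of_succ_ne {i : ℕ} (hi : i + 1 ≠ k) : y i < y (i + 1) := by
  have hyk : y k = 0 := by rw [← hy0, hinv]
  by_contra hasc
  have hdes : y (i + 1) < y i := by
    have := hinv.injective.ne (show i ≠ i + 1 by omega)
    omega
  rcases Nat.lt_or_gt_of_ne hi with hlt | hgt
  · have := add_le_apply_add_of_lt_succ (f := y) (a := i + 1) (t := k - (i + 1))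
      fun j hj _ => hgr.lt_succ hinv.injective hdes (by omega)
    rw [show i + 1 + (k - (i + 1)) = k by omega] at this
    omega
  · have := add_le_apply_add_of_lt_succ (f := y) (a := 0) (t := k)
      fun j _ hj => hgr.lt_succ hinv.injective hdes (by omega)
    rw [zero_add] at this
    omega

theorem le_apply_add (t : ℕ) : t ≤ y (k + t) :=
  (Nat.le_add_left _ _).trans <| add_le_apply_add_of_lt_succ fun _ hi _ =>
    lt_succ_of_succ_ne hinv hgr hk hy0 (by omega)

theorem apply_eq_add {j : ℕ} (hj : j < k) : y j = k + j := by
  have hlow : k + j ≤ y j := by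
    have := add_le_apply_add_of_lt_succ (f := y) (a := 0) (t := j)
      fun _ _ hi => lt_succ_of_succ_ne hinv hgr hk hy0 (by omega)
    rwa [hy0, zero_add] at this
  have hhigh := le_apply_add hinv hgr hk hy0 (y j - k)
  rw [Nat.add_sub_cancel' (by omega), hinv] at hhigh
  omega

theorem apply_add_eq {j : ℕ} (hj : j < k) : y (k + j) = j := by
  rw [← apply_eq_add hinv hgr hk hy0 hj, hinv]

theorem two_mul_le_apply {x : ℕ} (hx : 2 * k ≤ x) : 2 * k ≤ y x := by
  by_contra hlt
  rcases Nat.lt_or_ge (y x) k with h | h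
  · have := apply_eq_add hinv hgr hk hy0 h
    rw [hinv] at this
    omega
  · have := apply_add_eq hinv hgr hk hy0 (j := y x - k) (by omega)
    rw [Nat.add_sub_cancel' h, hinv] at this
    omega

theorem le_apply_of_two_mul_le {x : ℕ} (hx : 2 * k ≤ x) : x ≤ y x := by
  have := add_le_apply_add_of_lt_succ (f := y) (a := 2 * k) (t := x - 2 * k)
    fun _ hi _ => lt_succ_of_succ_ne hinv hgr hk hy0 (by omega)
  rw [Nat.add_sub_cancel' hx] at this
  have := two_mul_le_apply hinv hgr hk hy0 (le_refl _)
  omega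

theorem apply_eq_self {x : ℕ} (hx : 2 * k ≤ x) : y x = x := by
  have h := le_apply_of_two_mul_le hinv hgr hk hy0 (two_mul_le_apply hinv hgr hk hy0 hx)
  rw [hinv] at h
  exact le_antisymm h (le_apply_of_two_mul_le hinv hgr hk hy0 hx)

theorem apply_eq_gfun (x : ℕ) : y x = gfun 0 k x := by
  unfold gfun
  rcases Nat.lt_or_ge x k with h | h
  · rw [apply_eq_add hinv hgr hk hy0 h]
    split_ifs <;> omega
  rcases Nat.lt_or_ge x (2 * k) with h' | h'
  · have := apply_add_eq hinv hgr hk hy0 (j := x - k) (by omega)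
    rw [Nat.add_sub_cancel' h] at this
    rw [this]
    split_ifs <;> omega
  · rw [apply_eq_self hinv hgr hk hy0 h']
    split_ifs <;> omega

end Involution

end IsGrassmannian

theorem rotheN_eq_square_of_apply_eq_gfun {w : Equiv.Perm ℕ} {k : ℕ} (hw : w * w = 1)
    (hg : ∀ x, w x = gfun 0 k x) : rotheN w = {p : ℕ × ℕ | p.1 < k ∧ p.2 < k} := by
  ext ⟨i, j⟩
  simp only [rotheN, Set.mem_ofPred_eq, inv_eq_of_mul_eq_one_right hw, hg, gfun]
  constructor
  · rintro ⟨h1, h2⟩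
    split_ifs at h1 h2 <;> omega
  · rintro ⟨h1, h2⟩
    constructor <;> split_ifs <;> omega

theorem stmt10_general (y : Equiv.Perm ℕ) (hy : y * y = 1)
    (hgr : ∀ i j : ℕ, y (i + 1) < y i → y (j + 1) < y j → i = j)
    (k : ℕ) (hk : 0 < k) (hy0 : y 0 = k) :
    rotheN y = {p : ℕ × ℕ | p.1 < k ∧ p.2 < k} ∧ (∀ x, y x = gfun 0 k x) := by
  have hinv : Involutive y := fun x => by
    rw [← Equiv.Perm.mul_apply, hy, Equiv.Perm.one_apply]
  have hg := IsGrassmannian.apply_eq_gfun hinv hgr hk hy0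
  exact ⟨rotheN_eq_square_of_apply_eq_gfun hy hg, hg⟩

/-- If `y ∈ S_∞` is a Grassmannian involution with `y(1) = k+1 > 1` (0-indexed:
`y(0) = k > 0`), then the Rothe diagram of `y` is the full square `[k] × [k]`,
and hence `y = g_k`. -/
theorem stmt10 (y : Equiv.Perm ℕ) (hy : y * y = 1)
    (hfin : Set.Finite {x | y x ≠ x})
    (hgr : ∀ i j : ℕ, y (i + 1) < y i → y (j + 1) < y j → i = j)
    (k : ℕ) (hk : 0 < k) (hy0 : y 0 = k) :
    rotheN y = {p : ℕ × ℕ | p.1 < k ∧ p.2 < k} ∧ (∀ x, y x = gfun 0 k x) :=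
  stmt10_general y hy hgr k hk hy0
end

section
/- A permutation w ∈ S_n is both 321-avoiding and 2143-avoiding if and only if w or w⁻¹ is Grassmannian (has at most one descent). -/
/-- `w` avoids the pattern 321. -/
def Avoids321 {n : ℕ} (w : Equiv.Perm (Fin n)) : Prop :=
  ¬ ∃ i j k : Fin n, i < j ∧ j < k ∧ w k < w j ∧ w j < w i

/-- `w` avoids the pattern 2143. -/
def Avoids2143 {n : ℕ} (w : Equiv.Perm (Fin n)) : Prop :=
  ¬ ∃ a b c d : Fin n, a < b ∧ b < c ∧ c < d ∧ w b < w a ∧ w a < w d ∧ w d < w c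

/-- `w` has a descent at (0-indexed) position `i`. -/
def IsDescentAt {n : ℕ} (w : Equiv.Perm (Fin n)) (i : ℕ) : Prop :=
  ∃ h : i + 1 < n, w ⟨i + 1, h⟩ < w ⟨i, Nat.lt_of_succ_lt h⟩

/-- `w` is Grassmannian: it has at most one descent. -/
def Grassmannian {n : ℕ} (w : Equiv.Perm (Fin n)) : Prop :=
  ∀ i j : ℕ, IsDescentAt w i → IsDescentAt w j → i = j

/-
If `w` avoids 321 and 2143, any two descents `p < q` of `w` carry the pattern 3142 on the
adjacent positions `p, p + 1, q, q + 1`. Both patterns are invariant under inversion, so two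
descents of `w⁻¹` make `w` contain 2413 on adjacent values `u, u + 1, v, v + 1`. A short case
analysis with the two avoided patterns puts these values between the others: `w (p + 1) ≤ u` and
`v < w q`; the same argument for `w⁻¹` puts the position of `u + 1` at most `p` and the position
of `v` after `q`. The four positions `w⁻¹ (u + 1) < p + 1 < q < w⁻¹ v` then carry 2143.
Conversely, a 321 or a 2143 contains two disjoint inversions, each spanning a descent.
-/

open Order

lemma exists_covBy_descent_of_apply_lt {α β : Type*} [LinearOrder α] [SuccOrder α]
    [IsSuccArchimedean α] [LinearOrder β] {f : α → β} {i j : α} (hij : i ≤ j)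
    (h : f j < f i) : ∃ p p', p ⋖ p' ∧ i ≤ p ∧ p' ≤ j ∧ f p' < f p := by
  by_contra! hf
  have hmono : MonotoneOn f (Set.Icc i j) :=
    monotoneOn_of_le_succ Set.ordConnected_Icc fun a ha hia hsa =>
      hf a (succ a) (covBy_succ_of_not_isMax ha) hia.1 hsa.2
  exact (hmono ⟨le_rfl, hij⟩ ⟨hij, le_rfl⟩ hij).not_gt h

section Permutation

variable {n : ℕ} {w : Equiv.Perm (Fin n)}

lemma isDescentAt_iff_exists_covBy {i : ℕ} :
    IsDescentAt w i ↔ ∃ p p' : Fin n, p ⋖ p' ∧ (p : ℕ) = i ∧ w p' < w p := by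
  constructor
  · rintro ⟨hi, hd⟩
    exact ⟨_, _, by simp [Fin.covBy_iff], rfl, hd⟩
  · rintro ⟨p, p', hp, rfl, hd⟩
    have hp' : (p : ℕ) + 1 = p' := Nat.covBy_iff_add_one_eq.1 (Fin.covBy_iff.1 hp)
    exact ⟨hp' ▸ p'.isLt, by convert hd⟩

lemma grassmannian_iff_forall_covBy :
    Grassmannian w ↔
      ∀ ⦃p p' q q' : Fin n⦄, p ⋖ p' → q ⋖ q' → w p' < w p → w q' < w q → p = q := by
  simp only [Grassmannian, isDescentAt_iff_exists_covBy]
  constructor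
  · intro h p p' q q' hp hq dp dq
    exact Fin.ext (h _ _ ⟨p, p', hp, rfl, dp⟩ ⟨q, q', hq, rfl, dq⟩)
  · rintro h _ _ ⟨p, p', hp, rfl, dp⟩ ⟨q, q', hq, rfl, dq⟩
    rw [h hp hq dp dq]

lemma exists_covBy_descents_of_not_grassmannian (hw : ¬ Grassmannian w) :
    ∃ p p' q q' : Fin n, p ⋖ p' ∧ q ⋖ q' ∧ p < q ∧ w p' < w p ∧ w q' < w q := by
  simp only [grassmannian_iff_forall_covBy, not_forall] at hw
  obtain ⟨p, p', q, q', hp, hq, dp, dq, hpq⟩ := hw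
  rcases lt_or_gt_of_ne hpq with hpq | hqp
  · exact ⟨p, p', q, q', hp, hq, hpq, dp, dq⟩
  · exact ⟨q, q', p, p', hq, hp, hqp, dq, dp⟩

lemma Grassmannian.avoids321 (hw : Grassmannian w) : Avoids321 w := by
  rintro ⟨i, j, k, hij, hjk, hkj, hji⟩
  obtain ⟨p, p', hp, -, hp'j, dp⟩ := exists_covBy_descent_of_apply_lt hij.le hji
  obtain ⟨q, q', hq, hjq, -, dq⟩ := exists_covBy_descent_of_apply_lt hjk.le hkj
  exact (hp.lt.trans_le (hp'j.trans hjq)).ne (grassmannian_iff_forall_covBy.1 hw hp hq dp dq)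

lemma Grassmannian.avoids2143 (hw : Grassmannian w) : Avoids2143 w := by
  rintro ⟨a, b, c, d, hab, hbc, hcd, hba, -, hdc⟩
  obtain ⟨p, p', hp, -, hp'b, dp⟩ := exists_covBy_descent_of_apply_lt hab.le hba
  obtain ⟨q, q', hq, hcq, -, dq⟩ := exists_covBy_descent_of_apply_lt hcd.le hdc
  exact (hp.lt.trans_le (hp'b.trans (hbc.le.trans hcq))).ne
    (grassmannian_iff_forall_covBy.1 hw hp hq dp dq)

lemma avoids321_inv_iff : Avoids321 w⁻¹ ↔ Avoids321 w := by
  suffices ∀ w : Equiv.Perm (Fin n), Avoids321 w → Avoids321 w⁻¹ from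
    ⟨fun h => inv_inv w ▸ this _ h, this w⟩
  rintro w h ⟨i, j, k, hij, hjk, hkj, hji⟩
  exact h ⟨w⁻¹ k, w⁻¹ j, w⁻¹ i, hkj, hji, by simpa using hij, by simpa using hjk⟩

lemma avoids2143_inv_iff : Avoids2143 w⁻¹ ↔ Avoids2143 w := by
  suffices ∀ w : Equiv.Perm (Fin n), Avoids2143 w → Avoids2143 w⁻¹ from
    ⟨fun h => inv_inv w ▸ this _ h, this w⟩
  rintro w h ⟨a, b, c, d, hab, hbc, hcd, hba, had, hdc⟩
  exact h ⟨w⁻¹ b, w⁻¹ a, w⁻¹ d, w⁻¹ c, hba, had, hdc,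
    by simpa using hab, by simpa using hbc, by simpa using hcd⟩

def IsAdjacent3142 (w : Equiv.Perm (Fin n)) (p p' q q' : Fin n) : Prop :=
  p ⋖ p' ∧ q ⋖ q' ∧ p' < q ∧ w p' < w q' ∧ w q' < w p ∧ w p < w q

lemma isAdjacent3142_of_covBy_descents (h321 : Avoids321 w) (h2143 : Avoids2143 w)
    {p p' q q' : Fin n} (hp : p ⋖ p') (hq : q ⋖ q') (hpq : p < q)
    (dp : w p' < w p) (dq : w q' < w q) : IsAdjacent3142 w p p' q q' := by
  have hp'q : p' < q := (hp.ge_of_gt hpq).lt_of_ne <| by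
    rintro rfl
    exact h321 ⟨p, p', q', hp.lt, hq.lt, dq, dp⟩
  refine ⟨hp, hq, hp'q, ?_, ?_, ?_⟩
  · refine lt_of_not_ge fun h => h321 ⟨p, p', q', hp.lt, hp'q.trans hq.lt, ?_, dp⟩
    exact h.lt_of_ne (w.injective.ne (hp'q.trans hq.lt).ne')
  · refine lt_of_not_ge fun h => h2143 ⟨p, p', q, q', hp.lt, hp'q, hq.lt, dp, ?_, dq⟩
    exact h.lt_of_ne (w.injective.ne (hpq.trans hq.lt).ne)
  · refine lt_of_not_ge fun h => h321 ⟨p, q, q', hpq, hq.lt, dq, ?_⟩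
    exact h.lt_of_ne (w.injective.ne hpq.ne')

lemma exists_isAdjacent3142 (h321 : Avoids321 w) (h2143 : Avoids2143 w)
    (hw : ¬ Grassmannian w) : ∃ p p' q q', IsAdjacent3142 w p p' q q' := by
  obtain ⟨p, p', q, q', hp, hq, hpq, dp, dq⟩ := exists_covBy_descents_of_not_grassmannian hw
  exact ⟨p, p', q, q', isAdjacent3142_of_covBy_descents h321 h2143 hp hq hpq dp dq⟩

lemma IsAdjacent3142.apply_le_and_lt_apply (h321 : Avoids321 w) (h2143 : Avoids2143 w)
    {p p' q q' u u' v v' : Fin n} (h : IsAdjacent3142 w p p' q q')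
    (h' : IsAdjacent3142 w⁻¹ u u' v v') : w p' ≤ u ∧ v < w q := by
  obtain ⟨hp, hq, hp'q, h1, h2, h3⟩ := h
  obtain ⟨a, rfl⟩ := w.surjective u'
  obtain ⟨b, rfl⟩ := w.surjective v'
  obtain ⟨c, rfl⟩ := w.surjective u
  obtain ⟨d, rfl⟩ := w.surjective v
  obtain ⟨hu, hv, -, hab, hbc, hcd⟩ :
      w c ⋖ w a ∧ w d ⋖ w b ∧ w a < w d ∧ a < b ∧ b < c ∧ c < d := by
    simpa [IsAdjacent3142] using h'
  constructor
  · refine le_of_not_gt fun hcp' => ?_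
    rcases lt_trichotomy c p' with hc | rfl | hc
    · exact h2143 ⟨a, c, q, q', hab.trans hbc, hc.trans hp'q, hq.lt, hu.lt,
        (hu.ge_of_gt hcp').trans_lt h1, h2.trans h3⟩
    · exact lt_irrefl _ hcp'
    · exact h321 ⟨p, p', c, hp.lt, hc, hcp', h1.trans h2⟩
  · refine lt_of_not_ge fun hqd => ?_
    rcases lt_trichotomy b q with hb | rfl | hb
    · exact h321 ⟨b, q, q', hb, hq.lt, h2.trans h3, hqd.trans_lt hv.lt⟩
    · exact hv.lt.not_ge hqd
    · exact h2143 ⟨p, p', b, d, hp.lt, hp'q.trans hb, hbc.trans hcd, h1.trans h2,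
        h3.trans_le hqd, hv.lt⟩

lemma IsAdjacent3142.not_inv (h321 : Avoids321 w) (h2143 : Avoids2143 w)
    {p p' q q' u u' v v' : Fin n} (h : IsAdjacent3142 w p p' q q') :
    ¬ IsAdjacent3142 w⁻¹ u u' v v' := by
  intro h'
  obtain ⟨hp'u, hvq⟩ := h.apply_le_and_lt_apply h321 h2143 h'
  obtain ⟨hu'p, hqv⟩ := h'.apply_le_and_lt_apply (avoids321_inv_iff.2 h321)
    (avoids2143_inv_iff.2 h2143) (by rwa [inv_inv])
  obtain ⟨hp, -, hp'q, -⟩ := h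
  obtain ⟨hu, -, hu'v, -⟩ := h'
  exact h2143 ⟨w⁻¹ u', p', q, w⁻¹ v, hu'p.trans_lt hp.lt, hp'q, hqv,
    by simpa using hp'u.trans_lt hu.lt, by simpa using hu'v, by simpa using hvq⟩

lemma grassmannian_or_grassmannian_inv (h321 : Avoids321 w) (h2143 : Avoids2143 w) :
    Grassmannian w ∨ Grassmannian w⁻¹ := by
  by_contra! h
  obtain ⟨p, p', q, q', h3142⟩ := exists_isAdjacent3142 h321 h2143 h.1
  obtain ⟨u, u', v, v', h2413⟩ := exists_isAdjacent3142 (avoids321_inv_iff.2 h321)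
    (avoids2143_inv_iff.2 h2143) h.2
  exact h3142.not_inv h321 h2143 h2413

end Permutation

/-- A permutation `w ∈ S_n` is both 321-avoiding and 2143-avoiding if and only if
`w` or `w⁻¹` is Grassmannian. -/
theorem stmt11 {n : ℕ} (w : Equiv.Perm (Fin n)) :
    (Avoids321 w ∧ Avoids2143 w) ↔ (Grassmannian w ∨ Grassmannian w⁻¹) := by
  refine ⟨fun ⟨h321, h2143⟩ => grassmannian_or_grassmannian_inv h321 h2143, ?_⟩
  rintro (hw | hw)
  · exact ⟨hw.avoids321, hw.avoids2143⟩
  · exact ⟨avoids321_inv_iff.1 hw.avoids321, avoids2143_inv_iff.1 hw.avoids2143⟩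
end

section
/- An involution y in S_n is 132-avoiding (dominant) if and only if y is weakly dominant with r(y) dominant; in particular, every dominant involution has the form (1,b_1)(2,b_2)⋯(k,b_k) with all b_i > k. -/
/-- `y` is weakly dominant with parameter `k` (0-indexed): `y` is the product of
transpositions `(0,b_0)(1,b_1)⋯(k-1,b_{k-1})` with all `b_i ≥ k`, i.e. each
`i < k` is mapped to a value `≥ k`, and each point `≥ k` is either fixed or
mapped into `[k]`. -/
def WeaklyDominantWith {n : ℕ} (y : Equiv.Perm (Fin n)) (k : ℕ) : Prop :=
  k ≤ n ∧ (∀ i : Fin n, i.1 < k → k ≤ (y i).1) ∧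
    (∀ i : Fin n, k ≤ i.1 → (y i = i ∨ (y i).1 < k))

/-- The first `k` entries (0-indexed values) of the one-line notation of `r(y)`:
the values `y(i) − k` for `i < k`. -/
def topsList (n : ℕ) (y : Equiv.Perm (Fin n)) (k : ℕ) : List ℕ :=
  ((List.finRange n).filter (fun i => decide (i.1 < k))).map (fun i => (y i).1 - k)

/-- The one-line notation of `r(y)` for a weakly dominant involution `y` with
parameter `k`: the values `y(i) − k` for `i < k`, followed by the remaining
values of `[n−k]` in increasing order. -/
def oneLineR (n : ℕ) (y : Equiv.Perm (Fin n)) (k : ℕ) : List ℕ :=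
  topsList n y k ++ (List.range (n - k)).filter (fun m => decide (m ∉ topsList n y k))

/-- `w` avoids the pattern 132: no `i < j < k` with `w(i) < w(k) < w(j)`. -/
def Avoids132 {n : ℕ} (w : Equiv.Perm (Fin n)) : Prop :=
  ¬ ∃ i j k : Fin n, i < j ∧ j < k ∧ w i < w k ∧ w k < w j

/-- A list (one-line notation) avoids the pattern 132. -/
def ListAvoids132 (L : List ℕ) : Prop :=
  ¬ ∃ i j l : ℕ, i < j ∧ j < l ∧ l < L.length ∧
    L.getD i 0 < L.getD l 0 ∧ L.getD l 0 < L.getD j 0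

/-!
A 132-pattern of an involution `y` can be moved to positions carrying values `≥ k` as soon as
`y` maps every `i < k` to a value `≥ k`: if the first position of the pattern is `≥ k`, then
`y = y⁻¹` turns the pattern at positions `i < j < l` into one at positions `y i < y l < y j`.
For a weakly dominant involution, the one-line notation of `r(y)` is the subword of values `≥ k`
of the one-line notation of `y`, shifted down by `k`; hence `r(y)` avoids 132 iff `y` has no
132-pattern with values `≥ k`, iff `y` avoids 132. Conversely, a 132-avoiding involution is weakly
dominant, with `k` the length of its initial run of excedances `i < y i`: a later excedance `i`
would give the pattern `(k, i, y i)`.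
-/

open List

namespace List

variable {α : Type*}

theorem triple_sublist_iff {a b c : α} {L : List α} :
    [a, b, c] <+ L ↔
      ∃ i j l : Fin L.length, i < j ∧ j < l ∧ L[i] = a ∧ L[j] = b ∧ L[l] = c := by
  constructor
  · intro h
    obtain ⟨is, his, hsorted⟩ := sublist_eq_map_getElem h
    rcases is with _ | ⟨i, _ | ⟨j, _ | ⟨l, _ | _⟩⟩⟩ <;> simp only [map_cons, map_nil, cons.injEq,
      reduceCtorEq, and_false] at his
    simp only [pairwise_cons, mem_cons, forall_eq_or_imp, not_mem_nil] at hsorted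
    exact ⟨i, j, l, hsorted.1.1, hsorted.2.1.1, his.1.symm, his.2.1.symm, his.2.2.1.symm⟩
  · rintro ⟨i, j, l, hij, hjl, rfl, rfl, rfl⟩
    exact map_getElem_sublist (is := [i, j, l]) (by simp [hij, hjl, hij.trans hjl])

theorem triple_sublist_ofFn_iff {n : ℕ} {f : Fin n → α} {a b c : α} :
    [a, b, c] <+ ofFn f ↔ ∃ i j l : Fin n, i < j ∧ j < l ∧ f i = a ∧ f j = b ∧ f l = c := by
  rw [triple_sublist_iff]
  constructor
  · rintro ⟨i, j, l, hij, hjl, rfl, rfl, rfl⟩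
    exact ⟨i.cast (by simp), j.cast (by simp), l.cast (by simp), hij, hjl,
      (List.getElem_ofFn _).symm, (List.getElem_ofFn _).symm, (List.getElem_ofFn _).symm⟩
  · rintro ⟨i, j, l, hij, hjl, rfl, rfl, rfl⟩
    exact ⟨i.cast (by simp), j.cast (by simp), l.cast (by simp), hij, hjl, by simp, by simp, by simp⟩

end List

theorem listAvoids132_iff_not_exists_sublist {L : List ℕ} :
    ListAvoids132 L ↔ ¬∃ a b c, [a, c, b] <+ L ∧ a < b ∧ b < c := by
  rw [ListAvoids132, not_congr]
  simp only [triple_sublist_iff]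
  constructor
  · rintro ⟨i, j, l, hij, hjl, hl, h⟩
    rw [getD_eq_getElem _ _ (show i < L.length by omega),
      getD_eq_getElem _ _ (show j < L.length by omega),
      getD_eq_getElem _ _ hl] at h
    exact ⟨_, _, _, ⟨⟨i, by omega⟩, ⟨j, by omega⟩, ⟨l, hl⟩, hij, hjl, rfl, rfl, rfl⟩, h⟩
  · rintro ⟨-, -, -, ⟨i, j, l, hij, hjl, rfl, rfl, rfl⟩, h⟩
    refine ⟨i, j, l, hij, hjl, l.2, ?_⟩
    rwa [getD_eq_getElem _ _ i.2, getD_eq_getElem _ _ j.2, getD_eq_getElem _ _ l.2]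

theorem listAvoids132_map_sub_filter_iff (k : ℕ) (L : List ℕ) :
    ListAvoids132 ((L.filter (k ≤ ·)).map (· - k)) ↔
      ¬∃ a b c, [a, c, b] <+ L ∧ k ≤ a ∧ a < b ∧ b < c := by
  rw [listAvoids132_iff_not_exists_sublist, not_congr]
  constructor
  · rintro ⟨a, b, c, hs, hab, hbc⟩
    obtain ⟨l, hl, hmap⟩ := sublist_map_iff.1 hs
    have hlk : ∀ v ∈ l, k ≤ v := fun v hv => (mem_filter.1 (hl.subset hv)).2 |> of_decide_eq_true
    rcases l with _ | ⟨a', _ | ⟨c', _ | ⟨b', _ | _⟩⟩⟩ <;> simp only [map_cons, map_nil,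
      cons.injEq, reduceCtorEq, and_false] at hmap
    simp only [mem_cons, forall_eq_or_imp] at hlk
    exact ⟨a', b', c', hl.trans filter_sublist, hlk.1, by omega, by omega⟩
  · rintro ⟨a, b, c, hs, hka, hab, hbc⟩
    have hfilter : [a, c, b] <+ L.filter (k ≤ ·) := by
      simpa [hka, hka.trans hab.le, hka.trans (hab.trans hbc).le] using hs.filter (k ≤ ·)
    exact ⟨a - k, b - k, c - k, hfilter.map (· - k), by omega, by omega⟩

section Involution

variable {n k : ℕ} {y : Equiv.Perm (Fin n)}

theorem exists_pattern132_above_of_involutive (hy : Function.Involutive y)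
    (hk : ∀ i : Fin n, i.1 < k → k ≤ (y i).1) (h : ¬Avoids132 y) :
    ∃ i j l : Fin n, i < j ∧ j < l ∧ y i < y l ∧ y l < y j ∧ k ≤ (y i).1 := by
  obtain ⟨i, j, l, hij, hjl, hil, hlj⟩ := not_not.1 h
  by_cases hi : i.1 < k
  · exact ⟨i, j, l, hij, hjl, hil, hlj, hk i hi⟩
  · refine ⟨y i, y l, y j, hil, hlj, ?_, ?_, ?_⟩ <;> simp only [hy _]
    · exact hij
    · exact hjl
    · omega

theorem weaklyDominantWith_of_lt_apply_of_apply_le (hy : Function.Involutive y) (hkn : k ≤ n)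
    (hlow : ∀ i : Fin n, i.1 < k → i < y i) (hhigh : ∀ i : Fin n, k ≤ i.1 → y i ≤ i) :
    WeaklyDominantWith y k := by
  refine ⟨hkn, fun i hi => ?_, fun i hi => ?_⟩
  · by_contra! h
    have := hlow (y i) h
    rw [hy i] at this
    exact lt_asymm this (hlow i hi)
  · rcases (hhigh i hi).lt_or_eq with h | h
    · refine .inr (by_contra fun h' => ?_)
      have := hhigh (y i) (not_lt.1 h')
      rw [hy i] at this
      exact not_lt.2 this h
    · exact .inl h

theorem exists_weaklyDominantWith_of_avoids132 (hy : Function.Involutive y) (hA : Avoids132 y) :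
    ∃ k, WeaklyDominantWith y k := by
  classical
  set k := Nat.findGreatest (fun m => ∀ i : Fin n, i.1 < m → i < y i) n
  have hlow : ∀ i : Fin n, i.1 < k → i < y i :=
    Nat.findGreatest_spec (P := fun m => ∀ i : Fin n, i.1 < m → i < y i) (Nat.zero_le n)
      (fun _ h => absurd h (Nat.not_lt_zero _))
  have hhigh : ∀ i : Fin n, k ≤ i.1 → y i ≤ i := by
    intro i hi
    have hkn : k < n := hi.trans_lt i.2
    have hyk : y ⟨k, hkn⟩ ≤ ⟨k, hkn⟩ := by
      obtain ⟨j, hj, hyj⟩ : ∃ j : Fin n, j.1 < k + 1 ∧ y j ≤ j := by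
        simpa using Nat.findGreatest_is_greatest (lt_add_one k) hkn
      have hjk : j.1 = k :=
        (Nat.lt_succ_iff.1 hj).antisymm (not_lt.1 fun h => not_lt.2 hyj (hlow j h))
      rwa [show j = ⟨k, hkn⟩ from Fin.ext hjk] at hyj
    by_contra! h
    have hki : k < i.1 := hi.lt_of_ne fun he => not_lt.2 hyk (by simpa [he] using h)
    refine hA ⟨⟨k, hkn⟩, i, y i, hki, h, ?_, ?_⟩ <;> rw [hy i]
    · exact hyk.trans_lt hki
    · exact h
  exact ⟨k, weaklyDominantWith_of_lt_apply_of_apply_le hy (Nat.findGreatest_le n) hlow hhigh⟩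

theorem apply_eq_self_of_le_apply (hW : WeaklyDominantWith y k)
    {i : Fin n} (hi : k ≤ i.1) (hyi : k ≤ (y i).1) : y i = i :=
  (hW.2.2 i hi).resolve_right (not_lt.2 hyi)

end Involution

section OneLine

variable {k d : ℕ} {y : Equiv.Perm (Fin (k + d))}

theorem topsList_eq_ofFn :
    topsList (k + d) y k = ofFn fun i : Fin k => (y (Fin.castAdd d i) : ℕ) - k := by
  rw [topsList, finRange, ofFn_add, filter_append, filter_eq_self.2, filter_eq_nil_iff.2,
    append_nil, map_ofFn]
  · rfl
  · simp
  · simp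

theorem notMem_topsList_iff (hy : Function.Involutive y) (hW : WeaklyDominantWith y k)
    (j : Fin d) : (j : ℕ) ∉ topsList (k + d) y k ↔ k ≤ (y (Fin.natAdd k j)).1 := by
  simp only [topsList, mem_map, mem_filter, mem_finRange, true_and, decide_eq_true_eq, not_exists,
    not_and]
  constructor
  · intro h
    by_contra! hlt
    exact h _ hlt (by rw [hy]; simp)
  · intro hle i hi hyi
    have hyi' : y i = Fin.natAdd k j := Fin.ext (by have := hW.2.1 i hi; simp; omega)
    have : i = Fin.natAdd k j := by
      rw [← hy i, hyi', apply_eq_self_of_le_apply hW (by simp) hle]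
    simp [this] at hi

theorem filter_notMem_topsList (hy : Function.Involutive y) (hW : WeaklyDominantWith y k) :
    (range d).filter (fun m => decide (m ∉ topsList (k + d) y k)) =
      ((ofFn fun j : Fin d => (y (Fin.natAdd k j) : ℕ)).filter (k ≤ ·)).map (· - k) := by
  rw [ofFn_eq_map, filter_map, map_map, ← map_coe_finRange_eq_range, filter_map]
  have hfilter : ∀ j ∈ finRange d, decide ((j : ℕ) ∉ topsList (k + d) y k) =
      decide (k ≤ (y (Fin.natAdd k j) : ℕ)) := fun j _ =>
    decide_eq_decide.2 (notMem_topsList_iff hy hW j)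
  simp only [Function.comp_def]
  rw [filter_congr hfilter]
  refine map_congr_left fun j hj => ?_
  have hle : k ≤ (y (Fin.natAdd k j) : ℕ) := by simpa using (mem_filter.1 hj).2
  simp [apply_eq_self_of_le_apply hW (by simp) hle]

end OneLine

theorem oneLineR_eq_map_filter {n k : ℕ} {y : Equiv.Perm (Fin n)} (hy : Function.Involutive y)
    (hW : WeaklyDominantWith y k) :
    oneLineR n y k = ((ofFn fun i => (y i : ℕ)).filter (k ≤ ·)).map (· - k) := by
  obtain ⟨d, rfl⟩ := Nat.exists_eq_add_of_le hW.1
  rw [oneLineR, Nat.add_sub_cancel_left, filter_notMem_topsList hy hW, topsList_eq_ofFn, ofFn_add,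
    filter_append, map_append]
  congr 1
  rw [filter_eq_self.2, map_ofFn]
  · rfl
  · simpa using fun i : Fin k => hW.2.1 (Fin.castLE (Nat.le_add_right k d) i) i.2

/-- An involution `y ∈ S_n` is dominant (132-avoiding) if and only if `y` is
weakly dominant and `r(y)` is dominant; in particular every dominant involution
has the form `(1,b_1)(2,b_2)⋯(k,b_k)` with all `b_i > k`. -/
theorem stmt16 {n : ℕ} (y : Equiv.Perm (Fin n)) (hy : y * y = 1) :
    Avoids132 y ↔
      ∃ k : ℕ, WeaklyDominantWith y k ∧ ListAvoids132 (oneLineR n y k) := by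
  have hinv : Function.Involutive y := fun i => by simpa using DFunLike.congr_fun hy i
  constructor
  · intro hA
    obtain ⟨k, hW⟩ := exists_weaklyDominantWith_of_avoids132 hinv hA
    refine ⟨k, hW, ?_⟩
    rw [oneLineR_eq_map_filter hinv hW, listAvoids132_map_sub_filter_iff]
    rintro ⟨_, _, _, hs, -, hab, hbc⟩
    obtain ⟨i, j, l, hij, hjl, rfl, rfl, rfl⟩ := triple_sublist_ofFn_iff.1 hs
    exact hA ⟨i, j, l, hij, hjl, hab, hbc⟩
  · rintro ⟨k, hW, hL⟩ hpat
    rw [oneLineR_eq_map_filter hinv hW, listAvoids132_map_sub_filter_iff] at hL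
    obtain ⟨i, j, l, hij, hjl, hil, hlj, hki⟩ :=
      exists_pattern132_above_of_involutive hinv hW.2.1 (not_not.2 hpat)
    exact hL ⟨_, _, _, triple_sublist_ofFn_iff.2 ⟨i, j, l, hij, hjl, rfl, rfl, rfl⟩, hki, hil, hlj⟩
end

section
/- Let y = (1,b_1)(2,b_2)⋯(k,b_k) ∈ S_n be a weakly dominant involution (all b_i > k). Then the part of the Rothe diagram D(y) weakly below the diagonal decomposes as D̂(y) = D̂(g_k) ∪ E_k(r(y)), where D̂(g_k) = {(i,j) : 1 ≤ j ≤ i ≤ k} and E_k(u) = {(j+k, i) : (i,j) ∈ D(u)} is the transpose of D(r(y)) shifted down by k rows. -/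
/-- The part of the Rothe diagram of `y` weakly below the diagonal,
`D̂(y) = {(i,j) : j < y(i), i < y(j), j ≤ i}`, as a set of pairs of natural
numbers (0-indexed). -/
def DhatSet (n : ℕ) (y : Equiv.Perm (Fin n)) : Set (ℕ × ℕ) :=
  {p | ∃ hi : p.1 < n, ∃ hj : p.2 < n,
    p.2 < (y ⟨p.1, hi⟩).1 ∧ p.1 < (y ⟨p.2, hj⟩).1 ∧ p.2 ≤ p.1}

/-- The Rothe diagram of the permutation with one-line notation `L` (0-indexed):
`(i,j)` with `j < L[i]` and the value `j` not occurring among `L[0],…,L[i]`. -/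
def DListSet (L : List ℕ) : Set (ℕ × ℕ) :=
  {p | p.1 < L.length ∧ p.2 < L.getD p.1 0 ∧ ∀ i ≤ p.1, L.getD i 0 ≠ p.2}

/-- `E_k(u)`: the transpose of the diagram of `u`, shifted down by `k` rows. -/
def EkSet (k : ℕ) (L : List ℕ) : Set (ℕ × ℕ) :=
  {p | ∃ q ∈ DListSet L, p = (q.2 + k, q.1)}

/-!
Since `y` maps every `i < k` to a value `≥ k`, the rows `i < k` of `D̂(y)` are full staircase
rows. In a row `i ≥ k` every cell `(i, j)` has `j < k`, and, because `y (y i) = i`, the conditions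
`j < y i`, `i < y j` say exactly that `(j, i - k)` is a cell of `D(r(y))`: the entry `y j - k`
exceeds `i - k`, and `i - k = y m - k` for no `m ≤ j`. The increasing completion of the first `k`
entries of `r(y)` contributes no cells.
-/

theorem List.filter_finRange_val_lt {n k : ℕ} (hk : k ≤ n) :
    (List.finRange n).filter (fun i => decide (i.1 < k)) =
      (List.finRange k).map (Fin.castLE hk) := by
  refine ((List.sortedLT_finRange n).pairwise.filter _).sortedLT.eq_of_mem_iff
    (((Fin.strictMono_castLE hk).sortedLT_listMap).mpr (List.sortedLT_finRange k)) fun i => ?_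
  simp only [List.mem_filter, List.mem_finRange, true_and, List.mem_map, decide_eq_true_eq]
  exact ⟨fun h => ⟨⟨i, h⟩, rfl⟩, by rintro ⟨j, -, rfl⟩; exact j.2⟩

theorem mem_DListSet_append_of_lt {A B : List ℕ} {p : ℕ × ℕ} (hp : p.1 < A.length) :
    p ∈ DListSet (A ++ B) ↔ p ∈ DListSet A := by
  have hget : ∀ i ≤ p.1, (A ++ B).getD i 0 = A.getD i 0 := fun i hi =>
    List.getD_append _ _ _ _ (by omega)
  simp only [DListSet, Set.mem_ofPred_eq, List.length_append, hget p.1 le_rfl]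
  exact ⟨fun ⟨_, hb, hne⟩ => ⟨hp, hb, fun i hi => hget i hi ▸ hne i hi⟩,
    fun ⟨_, hb, hne⟩ => ⟨by omega, hb, fun i hi => (hget i hi).symm ▸ hne i hi⟩⟩

/-- A value below an entry of the increasing completion of `A` already occurs in `A` or
earlier in the completion. -/
theorem lt_length_of_mem_DListSet_append_filter_range {A : List ℕ} {m : ℕ} {p : ℕ × ℕ}
    (hp : p ∈ DListSet (A ++ (List.range m).filter (· ∉ A))) : p.1 < A.length := by
  set T := (List.range m).filter (· ∉ A)
  obtain ⟨hlen, hlt, hne⟩ := hp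
  by_contra! hA
  have ht : p.1 - A.length < T.length := by simp only [List.length_append] at hlen; omega
  have hrow : (A ++ T).getD p.1 0 = T[p.1 - A.length] := by
    rw [List.getD_append_right _ _ _ _ hA, List.getD_eq_getElem]
  rw [hrow] at hlt
  have hTm : T[p.1 - A.length] < m :=
    List.mem_range.mp (List.mem_filter.mp (List.getElem_mem ht)).1
  by_cases hpA : p.2 ∈ A
  · obtain ⟨i, hi, hip⟩ := List.getElem_of_mem hpA
    exact hne i (by omega) (by rw [List.getD_append _ _ _ _ hi, List.getD_eq_getElem _ _ hi, hip])
  · have hpT : p.2 ∈ T := List.mem_filter.mpr ⟨List.mem_range.mpr (by omega), by simpa using hpA⟩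
    obtain ⟨s, hs, hsp⟩ := List.getElem_of_mem hpT
    have hsorted : T.SortedLT := ((List.sortedLT_range m).pairwise.filter _).sortedLT
    have hst : s < p.1 - A.length := by
      rw [← hsorted.getElem_lt_getElem_iff (hi := hs) (hj := ht), hsp]; exact hlt
    refine hne (A.length + s) (by omega) ?_
    rw [List.getD_append_right _ _ _ _ (by omega), List.getD_eq_getElem _ _ (by omega)]
    simpa using hsp

theorem mem_DListSet_append_filter_range_iff {A : List ℕ} {m : ℕ} {p : ℕ × ℕ} :
    p ∈ DListSet (A ++ (List.range m).filter (· ∉ A)) ↔ p ∈ DListSet A :=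
  ⟨fun hp => (mem_DListSet_append_of_lt (lt_length_of_mem_DListSet_append_filter_range hp)).mp hp,
    fun hp => (mem_DListSet_append_of_lt hp.1).mpr hp⟩

theorem mem_EkSet_iff {k : ℕ} {L : List ℕ} {p : ℕ × ℕ} :
    p ∈ EkSet k L ↔ k ≤ p.1 ∧ (p.2, p.1 - k) ∈ DListSet L := by
  constructor
  · rintro ⟨q, hq, rfl⟩
    simpa using hq
  · rintro ⟨hk, hp⟩
    exact ⟨_, hp, by ext <;> simp; omega⟩

theorem topsList_eq_ofFn_s17 {n k : ℕ} (y : Equiv.Perm (Fin n)) (hk : k ≤ n) :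
    topsList n y k = List.ofFn fun a : Fin k => (y (Fin.castLE hk a)).1 - k := by
  rw [topsList, List.filter_finRange_val_lt hk, List.map_map, List.ofFn_eq_map]; rfl

theorem topsList_length {n k : ℕ} (y : Equiv.Perm (Fin n)) (hk : k ≤ n) :
    (topsList n y k).length = k := by
  simp [topsList_eq_ofFn_s17 y hk]

theorem topsList_getD {n k a : ℕ} (y : Equiv.Perm (Fin n)) (hk : k ≤ n) (ha : a < k) :
    (topsList n y k).getD a 0 = (y ⟨a, ha.trans_le hk⟩).1 - k := by
  simp [topsList_eq_ofFn_s17 y hk, ha]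

section WeaklyDominant

variable {n k : ℕ} {y : Equiv.Perm (Fin n)}

theorem mem_DhatSet_iff_of_lt (hwd : WeaklyDominantWith y k) {i j : ℕ} (hi : i < k) :
    (i, j) ∈ DhatSet n y ↔ j ≤ i := by
  obtain ⟨hk, hlow, -⟩ := hwd
  refine ⟨fun ⟨_, _, _, _, hji⟩ => hji, fun hji => ?_⟩
  have hin : i < n := hi.trans_le hk
  have hjn : j < n := by omega
  have hyi := hlow ⟨i, hin⟩ hi
  have hyj := hlow ⟨j, hjn⟩ (show j < k by omega)
  exact ⟨hin, hjn, show j < (y ⟨i, hin⟩).1 by omega, show i < (y ⟨j, hjn⟩).1 by omega, hji⟩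

theorem mem_DhatSet_iff_of_le (hy : y * y = 1) (hwd : WeaklyDominantWith y k) {i j : ℕ}
    (hi : k ≤ i) : (i, j) ∈ DhatSet n y ↔ (j, i - k) ∈ DListSet (topsList n y k) := by
  obtain ⟨hk, hlow, hhigh⟩ := hwd
  have hyy (x : Fin n) : y (y x) = x := by simpa using congr($hy x)
  simp only [DhatSet, DListSet, Set.mem_ofPred_eq, topsList_length y hk]
  constructor
  · rintro ⟨hin, hjn, hjyi, hiyj, hji⟩
    have hjk : j < k := by
      by_contra! hjk
      rcases hhigh ⟨j, hjn⟩ hjk with hfix | hlt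
      · rw [hfix] at hiyj; simp only at hiyj; omega
      · omega
    refine ⟨hjk, ?_, fun m hm hmi => ?_⟩
    · rw [topsList_getD y hk hjk]; omega
    · have hmk : m < k := by omega
      rw [topsList_getD y hk hmk] at hmi
      have hym : y ⟨m, hmk.trans_le hk⟩ = ⟨i, hin⟩ := by
        have := hlow ⟨m, hmk.trans_le hk⟩ hmk
        ext; simp only at this ⊢; omega
      have : y ⟨i, hin⟩ = ⟨m, hmk.trans_le hk⟩ := by rw [← hym, hyy]
      rw [this] at hjyi; simp only at hjyi; omega
  · rintro ⟨hjk, hiyj, hne⟩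
    rw [topsList_getD y hk hjk] at hiyj
    have hjn : j < n := hjk.trans_le hk
    have hyj := hlow ⟨j, hjn⟩ hjk
    have hin : i < n := by have := (y ⟨j, hjn⟩).2; omega
    refine ⟨hin, hjn, ?_, by omega, by omega⟩
    by_contra! hyi
    refine hne (y ⟨i, hin⟩) hyi ?_
    rw [topsList_getD y hk (by omega), Fin.eta, hyy]

end WeaklyDominant

/-- For a weakly dominant involution `y = (1,b_1)⋯(k,b_k) ∈ S_n` (all `b_i > k`),
the below-diagonal Rothe diagram decomposes as
`D̂(y) = D̂(g_k) ∪ E_k(r(y))`, where `D̂(g_k)` is the staircase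
`{(i,j) : j ≤ i < k}` (0-indexed) and `E_k(r(y))` is the transpose of `D(r(y))`
shifted down by `k` rows. -/
theorem stmt17 {n : ℕ} (y : Equiv.Perm (Fin n)) (hy : y * y = 1)
    (k : ℕ) (hwd : WeaklyDominantWith y k) :
    DhatSet n y = {p : ℕ × ℕ | p.2 ≤ p.1 ∧ p.1 < k} ∪ EkSet k (oneLineR n y k) := by
  ext ⟨i, j⟩
  rw [Set.mem_union, mem_EkSet_iff, oneLineR, mem_DListSet_append_filter_range_iff]
  rcases lt_or_ge i k with hi | hi
  · simp [mem_DhatSet_iff_of_lt hwd hi, hi]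
  · simp [mem_DhatSet_iff_of_le hy hwd hi, hi, not_lt.mpr hi]
end
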